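/- Let A be an n×n complex matrix. If there exist complex numbers c_1,...,c_n such that |a_{i,i} - c_i| > Σ_{j≠i} |a_{i,j} - c_i| for all i ∈ [n], then rank(A) ≥ n - 1. -/

import Mathlib

/-!
Subtracting `c i` from every entry of row `i` subtracts the rank-one matrix `c ⬝ 𝟙ᵀ` from `A`.
The result is strictly diagonally dominant, hence invertible by Gershgorin, so it has rank `n`;
since rank is subadditive, `A` has rank at least `n - 1`.
-/

open Matrix

namespace Matrix

variable {m n K : Type*} [Fintype n]

theorem rank_add_le [Finite m] [Field K] (A B : Matrix m n K) :
    (A + B).rank ≤ A.rank + B.rank := by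
  rw [rank, rank, rank, mulVecLin_add]
  calc Module.finrank K (LinearMap.range (A.mulVecLin + B.mulVecLin))
      ≤ Module.finrank K ↥(LinearMap.range A.mulVecLin ⊔ LinearMap.range B.mulVecLin) :=
        Submodule.finrank_mono (LinearMap.range_add_le _ _)
    _ ≤ _ := Submodule.finrank_add_le_finrank_add_finrank _ _

theorem rank_add_vecMulVec_le [Finite m] [Field K] (A : Matrix m n K) (u : m → K) (v : n → K) :
    (A + vecMulVec u v).rank ≤ A.rank + 1 :=
  (rank_add_le A _).trans (Nat.add_le_add_left (rank_vecMulVec_le u v) _)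

theorem rank_eq_card_of_sum_row_lt_diag [DecidableEq n] [NormedField K] {A : Matrix n n K}
    (h : ∀ k, ∑ j ∈ Finset.univ.erase k, ‖A k j‖ < ‖A k k‖) :
    A.rank = Fintype.card n :=
  A.rank_of_isUnit <| (isUnit_iff_isUnit_det A).2 (det_ne_zero_of_sum_row_lt_diag h).isUnit

end Matrix

theorem rank_ge_sub_one_of_shifted_diag_dominant (n : ℕ) (A : Matrix (Fin n) (Fin n) ℂ)
    (c : Fin n → ℂ)
    (h : ∀ i : Fin n,
      ∑ j ∈ Finset.univ.erase i, ‖A i j - c i‖ < ‖A i i - c i‖) :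
    n - 1 ≤ A.rank := by
  have hD : (of fun i j => A i j - c i).rank = n :=
    (rank_eq_card_of_sum_row_lt_diag (A := of fun i j => A i j - c i) h).trans (Fintype.card_fin n)
  have hshift : (of fun i j => A i j - c i) = A + vecMulVec (-c) fun _ => 1 := by
    ext i j
    simp [vecMulVec_apply, sub_eq_add_neg]
  have hrank := rank_add_vecMulVec_le A (-c) fun _ => 1
  rw [← hshift, hD] at hrank
  omega
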